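/- Let λ be a partition of n+1 and let t be a bijective λ-tableau (not necessarily standard). Suppose that the symbol n+1 occupies a column of length r in t, and let (r, c) be the removable node of λ in row r (so c = λ_r). Let R be the set of symbols in t whose columns have length strictly smaller than r. Then in the Specht module S^λ over ℤ one has e_t · L_{n+1} = (c − r) e_t + Σ_{i ∈ R} e_{t·(n+1, i)}. -/

import Mathlib

namespace CarterPayne

open Finset

/-- A partition of `n`, presented by its parts function; rows are indexed from `1`. -/
structure Partition (n : ℕ) where
  parts : ℕ → ℕ
  parts_zero : parts 0 = 0
  antitone : ∀ ⦃i j : ℕ⦄, 0 < i → i ≤ j → parts j ≤ parts i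
  finite_support : (Function.support parts).Finite
  sum_parts : ∑ᶠ i, parts i = n

variable {n : ℕ}

/-- The set of cells `(row, column)` (both 1-indexed) of the Young diagram of `μ`. -/
def Partition.cells (μ : Partition n) : Set (ℕ × ℕ) :=
  {c | 0 < c.1 ∧ 0 < c.2 ∧ c.2 ≤ μ.parts c.1}

/-- A tabloid for the composition `c` of `n`: an assignment of the `n` symbols to rows
(rows indexed from 1), row `i` receiving exactly `c i` symbols. -/
def Tabloid (n : ℕ) (c : ℕ → ℕ) : Type :=
  {g : Fin n → ℕ // ∀ i, (Finset.univ.filter fun k => g k = i).card = c i}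

/-- The permutation module `M^c` over `R`: the free `R`-module on the set of tabloids. -/
abbrev PermMod (R : Type*) [CommRing R] (n : ℕ) (c : ℕ → ℕ) := Tabloid n c →₀ R

/-- The action of a permutation of the symbols on tabloids. -/
def permTabloid (c : ℕ → ℕ) (π : Equiv.Perm (Fin n)) (f : Tabloid n c) : Tabloid n c :=
  ⟨fun k => f.1 (π.symm k), fun i => by
    rw [← f.2 i]
    exact Finset.card_equiv π.symm fun a => by simp⟩

/-- The `R`-linear action of a permutation of the symbols on `M^c`. -/
noncomputable def permM (R : Type*) [CommRing R] (c : ℕ → ℕ) (π : Equiv.Perm (Fin n)) :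
    PermMod R n c →ₗ[R] PermMod R n c :=
  Finsupp.lmapDomain R R (permTabloid c π)

/-- A bijective `μ`-tableau, presented by the placement map which sends each of the
`n` symbols to the cell of the Young diagram containing it. -/
structure Placement (μ : Partition n) where
  pos : Fin n → ℕ × ℕ
  mem : ∀ k, pos k ∈ μ.cells
  inj : Function.Injective pos
  surj : ∀ c ∈ μ.cells, ∃ k, pos k = c

/-- The column stabilizer of a bijective tableau, as a set of permutations of the symbols. -/
def colStab {μ : Partition n} (T : Placement μ) : Finset (Equiv.Perm (Fin n)) :=
  Finset.univ.filter fun π => ∀ k, (T.pos (π k)).2 = (T.pos k).2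

lemma rowFiber_card {μ : Partition n} (T : Placement μ) (i : ℕ) :
    (Finset.univ.filter fun k => (T.pos k).1 = i).card = μ.parts i := by
  classical
  have h : (Finset.univ.filter fun k => (T.pos k).1 = i).card
      = (Finset.Icc 1 (μ.parts i)).card := by
    apply Finset.card_bij (fun k _ => (T.pos k).2)
    · intro a ha
      simp only [Finset.mem_filter, Finset.mem_univ, true_and] at ha
      obtain ⟨h1, h2, h3⟩ := T.mem a
      exact Finset.mem_Icc.mpr ⟨h2, ha ▸ h3⟩
    · intro a ha b hb hab
      simp only [Finset.mem_filter, Finset.mem_univ, true_and] at ha hb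
      exact T.inj (Prod.ext (ha.trans hb.symm) hab)
    · intro j hj
      rw [Finset.mem_Icc] at hj
      have hi0 : 0 < i := by
        rcases Nat.eq_zero_or_pos i with h0 | h0
        · exfalso; rw [h0, μ.parts_zero] at hj; omega
        · exact h0
      obtain ⟨k, hk⟩ := T.surj (i, j) ⟨hi0, hj.1, hj.2⟩
      exact ⟨k, by simp [hk], by simp [hk]⟩
  rw [h, Nat.card_Icc]
  omega

/-- The row tabloid `{tπ}` associated to the bijective tableau `tπ`. -/
def rowTabloid {μ : Partition n} (T : Placement μ) (π : Equiv.Perm (Fin n)) :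
    Tabloid n μ.parts :=
  ⟨fun k => (T.pos (π k)).1, fun i => by
    rw [← rowFiber_card T i]
    exact Finset.card_equiv π fun a => by simp⟩

/-- The polytabloid `e_t` attached to a bijective tableau `t`. -/
noncomputable def polytabloid (R : Type*) [CommRing R] {μ : Partition n} (T : Placement μ) :
    PermMod R n μ.parts :=
  ∑ π ∈ colStab T, ((Equiv.Perm.sign π : ℤ) : R) • Finsupp.single (rowTabloid T π) (1 : R)

/-- The Specht module `S^μ`, the span in `M^μ` of all polytabloids. -/
noncomputable def Specht (R : Type*) [CommRing R] (μ : Partition n) :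
    Submodule R (PermMod R n μ.parts) :=
  Submodule.span R (Set.range fun T : Placement μ => polytabloid R T)

/-- `β` is obtained from the partition `α` of `n` by moving one box from
(the end of) row `a` to (the end of) row `b`; i.e. `β` is a one-box-shift of `α`. -/
structure OneBoxShift {n : ℕ} (α β : Partition n) (a b : ℕ) : Prop where
  a_pos : 0 < a
  a_lt_b : a < b
  rem : α.parts (a + 1) < α.parts a
  add : α.parts b < α.parts (b - 1)
  at_a : β.parts a = α.parts a - 1
  at_b : β.parts b = α.parts b + 1
  elsewhere : ∀ i, i ≠ a → i ≠ b → β.parts i = α.parts i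

/-- The Jucys-Murphy element `L_{n+1} = Σ_{i ≤ n} (i, n+1)`, acting on `M^c`. -/
noncomputable def jucysMurphy (R : Type*) [CommRing R] {n : ℕ} (c : ℕ → ℕ) :
    PermMod R (n + 1) c →ₗ[R] PermMod R (n + 1) c :=
  ∑ k ∈ Finset.univ.filter (fun k : Fin (n + 1) => k ≠ Fin.last n),
    permM R c (Equiv.swap k (Fin.last n))

/-- The length of column `c` of the Young diagram of `λ`. -/
noncomputable def colLen {m : ℕ} (lam : Partition m) (c : ℕ) : ℕ :=
  {i : ℕ | 0 < i ∧ c ≤ lam.parts i}.ncard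

/-- The tableau obtained from `t` by permuting its entries by `π` (the symbol at a cell
of `t·π` is obtained via `π` from the one at the same cell of `t`). -/
def Placement.permute {m : ℕ} {μ : Partition m} (T : Placement μ) (π : Equiv.Perm (Fin m)) :
    Placement μ where
  pos := T.pos ∘ π
  mem k := T.mem (π k)
  inj := T.inj.comp π.injective
  surj c hc := by
    obtain ⟨k, hk⟩ := T.surj c hc
    exact ⟨π.symm k, by simpa using hk⟩

/-!
Expand `e_t · L_{n+1} = ∑_{k ≠ n+1} e_{t·(n+1 k)}` and sort the symbols `k` by their column.
A symbol `k` in the column of `n+1` gives `e_{t·(n+1 k)} = -e_t`, so that column contributes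
`-(r - 1) e_t`. The other columns of length at least `r` are the columns `j ≤ c` other than the
column of `n+1`, and each contributes `e_t` by the Garnir relation
`∑_{k in column j} e_{t·(b k)} = e_t`, valid whenever the column of `b` is no longer than
column `j`. The symbols left over are exactly those of `R`.
-/

section Columns

variable {m : ℕ}

lemma Partition.exists_setOf_le_parts_eq_Icc (lam : Partition m) {j : ℕ} (hj : 0 < j) :
    ∃ M, {i | 0 < i ∧ j ≤ lam.parts i} = Set.Icc 1 M := by
  obtain ⟨B, hB⟩ := lam.finite_support.bddAbove
  have hshort : ∃ i, 0 < i ∧ lam.parts i < j := by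
    refine ⟨B + 1, B.succ_pos, ?_⟩
    by_contra! h
    have := hB (show B + 1 ∈ Function.support lam.parts from (by omega : lam.parts (B + 1) ≠ 0))
    omega
  refine ⟨Nat.find hshort - 1, Set.ext fun i =>
    ⟨fun ⟨hi, hji⟩ => ⟨hi, ?_⟩, fun ⟨hi, hiM⟩ => ⟨hi, ?_⟩⟩⟩
  · by_contra! hlt
    have := lam.antitone (Nat.find_spec hshort).1 (show Nat.find hshort ≤ i by omega)
    have := (Nat.find_spec hshort).2
    omega
  · have := Nat.find_min hshort (show i < Nat.find hshort by omega)
    exact not_lt.mp fun h => this ⟨hi, h⟩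

lemma le_colLen_iff (lam : Partition m) {j i : ℕ} (hj : 0 < j) (hi : 0 < i) :
    i ≤ colLen lam j ↔ j ≤ lam.parts i := by
  obtain ⟨M, hM⟩ := lam.exists_setOf_le_parts_eq_Icc hj
  have hcol : colLen lam j = M := by
    rw [colLen, hM, ← Finset.coe_Icc, Set.ncard_coe_finset, Nat.card_Icc, Nat.add_sub_cancel]
  have hmem := Set.ext_iff.mp hM i
  simp only [Set.mem_ofPred_eq, Set.mem_Icc] at hmem
  rw [hcol]
  tauto

variable {lam : Partition m}

def Placement.column (T : Placement lam) (j : ℕ) : Finset (Fin m) :=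
  Finset.univ.filter fun k => (T.pos k).2 = j

@[simp]
lemma Placement.mem_column {T : Placement lam} {j : ℕ} {k : Fin m} :
    k ∈ T.column j ↔ (T.pos k).2 = j := by
  simp [Placement.column]

lemma Placement.card_column (T : Placement lam) {j : ℕ} (hj : 0 < j) :
    (T.column j).card = colLen lam j := by
  conv_rhs => rw [← Nat.add_sub_cancel (colLen lam j) 1, ← Nat.card_Icc]
  refine Finset.card_bij (fun k _ => (T.pos k).1) (fun k hk => ?_) (fun k hk l hl hkl => ?_) ?_
  · obtain ⟨hrow, -, hlen⟩ := T.mem k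
    rw [Placement.mem_column] at hk
    exact Finset.mem_Icc.mpr ⟨hrow, (le_colLen_iff lam hj hrow).mpr (hk ▸ hlen)⟩
  · rw [Placement.mem_column] at hk hl
    exact T.inj (Prod.ext hkl (hk.trans hl.symm))
  · intro i hi
    rw [Finset.mem_Icc] at hi
    obtain ⟨k, hk⟩ := T.surj (i, j) ⟨hi.1, hj, (le_colLen_iff lam hj hi.1).mp hi.2⟩
    exact ⟨k, by simp [hk], by simp [hk]⟩

end Columns

section Polytabloids

variable {m : ℕ} {lam : Partition m}

open Equiv Equiv.Perm

lemma mem_colStab {T : Placement lam} {π : Perm (Fin m)} :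
    π ∈ colStab T ↔ ∀ k, (T.pos (π k)).2 = (T.pos k).2 := by
  simp [colStab]

lemma mul_mem_colStab {T : Placement lam} {σ τ : Perm (Fin m)}
    (hσ : σ ∈ colStab T) (hτ : τ ∈ colStab T) : σ * τ ∈ colStab T :=
  mem_colStab.mpr fun k => (mem_colStab.mp hσ (τ k)).trans (mem_colStab.mp hτ k)

lemma inv_mem_colStab {T : Placement lam} {σ : Perm (Fin m)} (hσ : σ ∈ colStab T) :
    σ⁻¹ ∈ colStab T :=
  mem_colStab.mpr fun k => by simpa using (mem_colStab.mp hσ (σ⁻¹ k)).symm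

lemma swap_mem_colStab {T : Placement lam} {k l : Fin m} (h : (T.pos k).2 = (T.pos l).2) :
    swap k l ∈ colStab T :=
  mem_colStab.mpr fun i => by
    rcases eq_or_ne i k with rfl | hik
    · simp [h]
    rcases eq_or_ne i l with rfl | hil
    · simp [h]
    · rw [swap_apply_of_ne_of_ne hik hil]

lemma rowTabloid_permute (T : Placement lam) (π σ : Perm (Fin m)) :
    rowTabloid (T.permute π) σ = rowTabloid T (π * σ) :=
  rfl

lemma mem_colStab_permute {T : Placement lam} {π σ : Perm (Fin m)} :
    σ ∈ colStab (T.permute π) ↔ π * σ * π⁻¹ ∈ colStab T := by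
  simp only [mem_colStab, Placement.permute, Function.comp_apply, Perm.mul_apply]
  exact ⟨fun h k => by simpa using h (π⁻¹ k), fun h k => by simpa using h (π k)⟩

lemma Placement.permute_one (T : Placement lam) : T.permute 1 = T :=
  rfl

lemma polytabloid_permute (T : Placement lam) (π : Perm (Fin m)) :
    polytabloid ℤ (T.permute π) =
      ∑ τ ∈ colStab T, (sign τ : ℤ) • Finsupp.single (rowTabloid T (τ * π)) (1 : ℤ) := by
  rw [polytabloid]
  refine Finset.sum_nbij' (fun σ => π * σ * π⁻¹) (fun τ => π⁻¹ * τ * π)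
    (fun σ hσ => mem_colStab_permute.mp hσ)
    (fun τ hτ => mem_colStab_permute.mpr (by group; exact hτ))
    (fun σ _ => by group) (fun τ _ => by group) (fun σ _ => ?_)
  rw [rowTabloid_permute, show π * σ * π⁻¹ * π = π * σ by group, map_mul, map_mul, map_inv,
    mul_inv_cancel_comm, Int.cast_id]

lemma permM_polytabloid (T : Placement lam) (π : Perm (Fin m)) :
    permM ℤ lam.parts π (polytabloid ℤ T) = polytabloid ℤ (T.permute π⁻¹) := by
  rw [polytabloid, map_sum, polytabloid_permute]
  refine Finset.sum_congr rfl fun τ _ => ?_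
  rw [map_smul, permM, Finsupp.lmapDomain_apply, Finsupp.mapDomain_single, Int.cast_id]
  rfl

lemma polytabloid_permute_mul {T : Placement lam} {ρ : Perm (Fin m)} (hρ : ρ ∈ colStab T)
    (π : Perm (Fin m)) :
    polytabloid ℤ (T.permute (ρ * π)) = (sign ρ : ℤ) • polytabloid ℤ (T.permute π) := by
  rw [polytabloid_permute, polytabloid_permute, Finset.smul_sum]
  refine Finset.sum_nbij' (· * ρ) (· * ρ⁻¹) (fun τ hτ => mul_mem_colStab hτ hρ)
    (fun τ hτ => mul_mem_colStab hτ (inv_mem_colStab hρ)) (fun τ _ => by group)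
    (fun τ _ => by group) (fun τ _ => ?_)
  rw [smul_smul, mul_assoc, ← Units.val_mul, Perm.sign_mul, mul_left_comm, Int.units_mul_self,
    mul_one]

lemma sign_smul_polytabloid_permute_mul {T : Placement lam} {ρ : Perm (Fin m)}
    (hρ : ρ ∈ colStab T) (π : Perm (Fin m)) :
    (sign (ρ * π) : ℤ) • polytabloid ℤ (T.permute (ρ * π)) =
      (sign π : ℤ) • polytabloid ℤ (T.permute π) := by
  rw [polytabloid_permute_mul hρ, smul_smul, ← Units.val_mul, Perm.sign_mul, mul_right_comm,
    Int.units_mul_self, one_mul]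

lemma polytabloid_permute_swap_of_col_eq (T : Placement lam) {b k : Fin m} (hkb : k ≠ b)
    (hcol : (T.pos k).2 = (T.pos b).2) :
    polytabloid ℤ (T.permute (swap b k)) = -polytabloid ℤ T := by
  rw [← mul_one (swap b k), polytabloid_permute_mul (swap_mem_colStab hcol.symm),
    sign_swap hkb.symm, T.permute_one]
  simp

end Polytabloids

section PermDecomposition

open Equiv Equiv.Perm

variable {α M : Type*} [Fintype α] [DecidableEq α] [AddCommMonoid M]

lemma support_swap_subset_insert {b k : α} {X : Finset α} (hk : k ∈ insert b X) :
    (swap b k).support ⊆ insert b X := fun z hz => by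
  obtain ⟨-, rfl | rfl⟩ := swap_apply_ne_self_iff.mp (mem_support.mp hz)
  exacts [mem_insert_self z X, hk]

/-- The factorization `σ = ρ * swap b k` has `k = σ⁻¹ b`. -/
lemma sum_perm_support_subset_insert {b : α} {X : Finset α} (hb : b ∉ X) (f : Perm α → M) :
    ∑ σ ∈ univ.filter (fun σ : Perm α => σ.support ⊆ insert b X), f σ =
      ∑ ρ ∈ univ.filter (fun ρ : Perm α => ρ.support ⊆ X),
        ∑ k ∈ insert b X, f (ρ * swap b k) := by
  have hfix : ∀ ρ : Perm α, ρ.support ⊆ X → ρ b = b := fun ρ hρ =>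
    notMem_support.mp fun h => hb (hρ h)
  rw [← Finset.sum_product']
  refine (Finset.sum_nbij' (fun p => p.1 * swap b p.2) (fun σ => (σ * swap b (σ⁻¹ b), σ⁻¹ b))
    ?_ ?_ ?_ ?_ fun _ _ => rfl).symm
  · rintro ⟨ρ, k⟩ hp
    simp only [mem_product, mem_filter, mem_univ, true_and] at hp ⊢
    exact (support_mul_le _ _).trans
      (sup_le (hp.1.trans (subset_insert _ _)) (support_swap_subset_insert hp.2))
  · intro σ hσ
    simp only [mem_product, mem_filter, mem_univ, true_and] at hσ ⊢
    have hk : σ⁻¹ b ∈ insert b X := by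
      rcases eq_or_ne (σ⁻¹ b) b with h | h
      · rw [h]; exact mem_insert_self b X
      · exact hσ (mem_support.mpr (by simpa using h.symm))
    refine ⟨?_, hk⟩
    rw [← subset_insert_iff_of_notMem (a := b) (by simp)]
    exact (support_mul_le _ _).trans (sup_le hσ (support_swap_subset_insert hk))
  · rintro ⟨ρ, k⟩ hp
    simp only [mem_product, mem_filter, mem_univ, true_and] at hp
    have hinv : (ρ * swap b k)⁻¹ b = k := by
      rw [mul_inv_rev, Perm.mul_apply, swap_inv, inv_eq_iff_eq.mpr (hfix ρ hp.1).symm,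
        swap_apply_left]
    dsimp only
    rw [hinv, mul_assoc, swap_mul_self, mul_one]
  · intro σ _
    simp [mul_assoc]

end PermDecomposition

section Garnir

variable {m : ℕ} {lam : Partition m}

open Equiv Equiv.Perm

lemma sum_sign_smul_single_rowTabloid_eq_zero (T : Placement lam) (π : Perm (Fin m))
    {S : Finset (Fin m)} {x y : Fin m} (hx : x ∈ S) (hy : y ∈ S) (hxy : x ≠ y)
    (hrow : (T.pos (π x)).1 = (T.pos (π y)).1) :
    ∑ σ ∈ univ.filter (fun σ : Perm (Fin m) => σ.support ⊆ S),
      (sign σ : ℤ) • Finsupp.single (rowTabloid T (π * σ)) (1 : ℤ) = 0 := by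
  have hswap : ∀ σ, rowTabloid T (π * (swap x y * σ)) = rowTabloid T (π * σ) := fun σ =>
    Subtype.ext <| funext fun k => by
      change (T.pos (π (swap x y (σ k)))).1 = (T.pos (π (σ k))).1
      rcases eq_or_ne (σ k) x with h | hx'
      · rw [h, swap_apply_left, hrow]
      rcases eq_or_ne (σ k) y with h | hy'
      · rw [h, swap_apply_right, hrow]
      · rw [swap_apply_of_ne_of_ne hx' hy']
  refine Finset.sum_involution (fun σ _ => swap x y * σ) (fun σ _ => ?_) (fun σ _ _ h => ?_)
    (fun σ hσ => ?_) (fun σ _ => swap_mul_self_mul x y σ)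
  · rw [hswap, Perm.sign_mul, sign_swap hxy, Units.val_mul, Units.val_neg, Units.val_one,
      neg_one_mul, neg_smul, add_neg_cancel]
  · exact hxy (swap_eq_one_iff.mp (mul_eq_right.mp h))
  · simp only [mem_filter, mem_univ, true_and] at hσ ⊢
    refine (support_mul_le _ _).trans (sup_le (fun z hz => ?_) hσ)
    obtain ⟨-, rfl | rfl⟩ := swap_apply_ne_self_iff.mp (mem_support.mp hz)
    exacts [hx, hy]

lemma exists_mem_column_row_eq (T : Placement lam) {b : Fin m} {j : ℕ} (hj : 0 < j)
    (hlen : colLen lam (T.pos b).2 ≤ colLen lam j) {τ : Perm (Fin m)} (hτ : τ ∈ colStab T) :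
    ∃ x ∈ T.column j, (T.pos (τ x)).1 = (T.pos (τ b)).1 := by
  obtain ⟨hrow, hcol, hle⟩ := T.mem (τ b)
  have hrow_le : (T.pos (τ b)).1 ≤ colLen lam j := by
    refine le_trans ?_ hlen
    rw [← mem_colStab.mp hτ b]
    exact (le_colLen_iff lam hcol hrow).mpr hle
  obtain ⟨y, hy⟩ := T.surj ((T.pos (τ b)).1, j) ⟨hrow, hj, (le_colLen_iff lam hj hrow).mp hrow_le⟩
  have hτy : τ (τ⁻¹ y) = y := τ.apply_symm_apply y
  refine ⟨τ⁻¹ y, ?_, by rw [hτy, hy]⟩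
  rw [Placement.mem_column, ← mem_colStab.mp hτ, hτy, hy]

lemma support_subset_column_mem_colStab {T : Placement lam} {j : ℕ} {ρ : Perm (Fin m)}
    (hρ : ρ.support ⊆ T.column j) : ρ ∈ colStab T :=
  mem_colStab.mpr fun k => by
    by_cases hk : k ∈ ρ.support
    · rw [Placement.mem_column.mp (hρ hk), Placement.mem_column.mp (hρ (apply_mem_support.mpr hk))]
    · rw [notMem_support.mp hk]

/-- The alternating sum of the `e_{T·σ}` over the permutations `σ` of `column j ∪ {b}` vanishes,
since in each of its row tabloids two of these symbols share a row; grouped into cosets of the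
permutations of column `j`, it is `|S_{column j}| • (e_T - ∑_{k in column j} e_{T·(b k)})`. -/
theorem sum_polytabloid_permute_swap_column (T : Placement lam) {b : Fin m} {j : ℕ} (hj : 0 < j)
    (hbj : (T.pos b).2 ≠ j) (hlen : colLen lam (T.pos b).2 ≤ colLen lam j) :
    ∑ k ∈ T.column j, polytabloid ℤ (T.permute (swap b k)) = polytabloid ℤ T := by
  set X := T.column j
  set H := univ.filter fun ρ : Perm (Fin m) => ρ.support ⊆ X
  have hbX : b ∉ X := by simpa [X] using hbj
  have hvanish : ∑ σ ∈ univ.filter (fun σ : Perm (Fin m) => σ.support ⊆ insert b X),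
      (sign σ : ℤ) • polytabloid ℤ (T.permute σ) = 0 := by
    simp_rw [polytabloid_permute, Finset.smul_sum, smul_smul]
    rw [Finset.sum_comm]
    refine Finset.sum_eq_zero fun τ hτ => ?_
    obtain ⟨x, hx, hrow⟩ := exists_mem_column_row_eq T hj hlen hτ
    simp_rw [mul_comm _ (sign τ : ℤ), ← smul_smul, ← Finset.smul_sum]
    rw [sum_sign_smul_single_rowTabloid_eq_zero T τ (mem_insert_of_mem hx) (mem_insert_self b X)
      (ne_of_mem_of_not_mem hx hbX) hrow, smul_zero]
  have hcoset : ∑ σ ∈ univ.filter (fun σ : Perm (Fin m) => σ.support ⊆ insert b X),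
      (sign σ : ℤ) • polytabloid ℤ (T.permute σ) =
        H.card • (polytabloid ℤ T - ∑ k ∈ X, polytabloid ℤ (T.permute (swap b k))) := by
    rw [sum_perm_support_subset_insert hbX, Finset.sum_congr rfl fun ρ hρ =>
      Finset.sum_congr rfl fun k _ => sign_smul_polytabloid_permute_mul
        (support_subset_column_mem_colStab (mem_filter.mp hρ).2) (swap b k),
      Finset.sum_const, Finset.sum_insert hbX, swap_self, ← Perm.one_def, T.permute_one,
      Perm.sign_one, Units.val_one, one_smul, sub_eq_add_neg, ← Finset.sum_neg_distrib]
    congr 2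
    refine Finset.sum_congr rfl fun k hk => ?_
    rw [sign_swap (ne_of_mem_of_not_mem hk hbX).symm]
    simp
  have hH : H.card ≠ 0 := Finset.card_ne_zero_of_mem (by simp [H] : (1 : Perm (Fin m)) ∈ H)
  rw [hcoset, smul_eq_zero] at hvanish
  exact (sub_eq_zero.mp (hvanish.resolve_left hH)).symm

end Garnir

section JucysMurphy

open Equiv Equiv.Perm

variable {m : ℕ} {lam : Partition m}

lemma sum_polytabloid_permute_swap_own_column (T : Placement lam) (b : Fin m) :
    ∑ k ∈ (T.column (T.pos b).2).erase b, polytabloid ℤ (T.permute (swap b k)) =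
      (colLen lam (T.pos b).2 - 1) • -polytabloid ℤ T := by
  rw [Finset.sum_congr rfl fun k hk => polytabloid_permute_swap_of_col_eq T (mem_erase.mp hk).1
      (Placement.mem_column.mp (mem_erase.mp hk).2), Finset.sum_const,
    card_erase_of_mem (Placement.mem_column.mpr rfl), T.card_column (T.mem b).2.1]

lemma sum_polytabloid_permute_swap_long_columns (T : Placement lam) (b : Fin m) :
    ∑ k ∈ (univ.erase b).filter (fun k => colLen lam (T.pos b).2 ≤ colLen lam (T.pos k).2),
        polytabloid ℤ (T.permute (swap b k)) =
      ((lam.parts (colLen lam (T.pos b).2) : ℤ) - colLen lam (T.pos b).2) • polytabloid ℤ T := by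
  set r := colLen lam (T.pos b).2
  set c := lam.parts r
  obtain ⟨hrow, hcol, hle⟩ := T.mem b
  have hr : 0 < r := hrow.trans_le ((le_colLen_iff lam hcol hrow).mpr hle)
  have hlong : ∀ {j}, 0 < j → (r ≤ colLen lam j ↔ j ∈ Icc 1 c) := fun hj => by
    rw [le_colLen_iff lam hj hr, mem_Icc]
    omega
  have hbc : (T.pos b).2 ∈ Icc 1 c := (hlong hcol).mp le_rfl
  rw [← Finset.sum_fiberwise_of_maps_to (g := fun k => (T.pos k).2) (t := Icc 1 c)
      fun k hk => (hlong (T.mem k).2.1).mp (mem_filter.mp hk).2,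
    ← Finset.add_sum_erase _ _ hbc]
  have hfiber : ∀ j ∈ Icc 1 c, ((univ.erase b).filter
      (fun k => r ≤ colLen lam (T.pos k).2)).filter (fun k => (T.pos k).2 = j) =
        (T.column j).erase b := fun j hj => by
    ext k
    simp only [mem_filter, mem_erase, mem_univ, and_true, Placement.mem_column]
    constructor
    · exact fun ⟨⟨hkb, _⟩, hkj⟩ => ⟨hkb, hkj⟩
    · exact fun ⟨hkb, hkj⟩ => ⟨⟨hkb, hkj ▸ (hlong (hkj ▸ (T.mem k).2.1)).mpr hj⟩, hkj⟩
  have hother : ∀ j ∈ (Icc 1 c).erase (T.pos b).2,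
      ∑ k ∈ (T.column j).erase b, polytabloid ℤ (T.permute (swap b k)) = polytabloid ℤ T :=
    fun j hj => by
      obtain ⟨hjb, hj⟩ := mem_erase.mp hj
      have hj0 : 0 < j := (mem_Icc.mp hj).1
      rw [erase_eq_of_notMem (by simpa using Ne.symm hjb)]
      exact sum_polytabloid_permute_swap_column T hj0 (Ne.symm hjb) ((hlong hj0).mpr hj)
  rw [hfiber _ hbc, sum_polytabloid_permute_swap_own_column, Finset.sum_congr rfl fun j hj => by
    rw [hfiber j (mem_of_mem_erase hj), hother j hj]]
  rw [Finset.sum_const, card_erase_of_mem hbc, Nat.card_Icc, ← Nat.cast_smul_eq_nsmul ℤ,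
    ← Nat.cast_smul_eq_nsmul ℤ, smul_neg, ← neg_smul, ← add_smul]
  congr 1
  have hc : 1 ≤ c := (mem_Icc.mp hbc).1.trans (mem_Icc.mp hbc).2
  omega

lemma jucysMurphy_polytabloid {n : ℕ} {lam : Partition (n + 1)} (t : Placement lam) :
    jucysMurphy ℤ lam.parts (polytabloid ℤ t) =
      ∑ k ∈ univ.erase (Fin.last n), polytabloid ℤ (t.permute (swap (Fin.last n) k)) := by
  rw [jucysMurphy, LinearMap.sum_apply, Finset.filter_ne']
  refine Finset.sum_congr rfl fun k _ => ?_
  rw [permM_polytabloid, swap_inv, swap_comm]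

end JucysMurphy

/-- Let `λ` be a partition of `n+1` and `t` a bijective `λ`-tableau (not
necessarily standard).  Suppose the symbol `n+1` occupies a column of length `r` in `t`,
and let `(r, c)` be the removable node of `λ` in row `r` (so `c = λ_r`).  Let `R` be the
set of symbols of `t` whose columns have length strictly smaller than `r`.  Then in the
Specht module `S^λ` over `ℤ`:
`e_t · L_{n+1} = (c - r) e_t + Σ_{i ∈ R} e_{t·(n+1, i)}`. -/
theorem stmt1 {n : ℕ} (lam : Partition (n + 1)) (t : Placement lam)
    (r : ℕ) (hr : r = colLen lam (t.pos (Fin.last n)).2)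
    (c : ℕ) (hc : c = lam.parts r) :
    jucysMurphy ℤ lam.parts (polytabloid ℤ t) =
      ((c : ℤ) - (r : ℤ)) • polytabloid ℤ t +
        ∑ k ∈ Finset.univ.filter (fun k : Fin (n + 1) => colLen lam (t.pos k).2 < r),
          polytabloid ℤ (t.permute (Equiv.swap (Fin.last n) k)) := by
  subst hr hc
  rw [jucysMurphy_polytabloid, ← Finset.sum_filter_add_sum_filter_not _
    (fun k => colLen lam (t.pos (Fin.last n)).2 ≤ colLen lam (t.pos k).2),
    sum_polytabloid_permute_swap_long_columns]
  congr 1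
  refine Finset.sum_congr (Finset.ext fun k => ?_) fun _ _ => rfl
  simp only [mem_filter, mem_erase, mem_univ, and_true, true_and, not_le]
  exact ⟨fun h => h.2, fun h => ⟨by rintro rfl; exact h.false, h⟩⟩

end CarterPayne
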